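/- arXiv:2407.17574 — 8 statements merged into one kernel-verified Lean document; each statement's English description precedes it below -/
import Mathlib

section
/- The function f : ℝ → ℝ with f(x) = 1 for x ≥ 0 and f(x) = 0 for x < 0 satisfies SLip f(x₀) = 0 for every x₀ ∈ ℝ, where SLip is the pointwise semi-Lipschitz constant computed with the usual metric on the domain and the quasi-metric d_u(s,t) = max{t-s,0} on the target; in particular f is pointwise semi-Lipschitz but not continuous at 0 for the usual metric. -/
open Filter Topology

/-! Every point is a local maximum of the Heaviside function: it is locally constant off `0` and
attains its maximum `1` on `[0, ∞)`. So the upper deviation `max (f x - f x₀) 0` vanishes near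
`x₀`, whatever it is divided by. The jump at `0` is seen by approaching from the left. -/

theorem limsup_ofReal_max_sub_div_eq_zero {α : Type*} {l : Filter α} {f d : α → ℝ} {c : ℝ}
    (h : ∀ᶠ x in l, f x ≤ c) :
    limsup (fun x => ENNReal.ofReal (max (f x - c) 0 / d x)) l = 0 := by
  have hzero : (fun x => ENNReal.ofReal (max (f x - c) 0 / d x)) =ᶠ[l] fun _ => ⊥ :=
    h.mono fun x hx => by simp [max_eq_right (sub_nonpos.mpr hx)]
  rw [limsup_congr hzero, limsup_const_bot]
  rfl

noncomputable def heaviside (x : ℝ) : ℝ := if 0 ≤ x then 1 else 0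

theorem heaviside_eq_zero_of_neg {x : ℝ} (hx : x < 0) : heaviside x = 0 := if_neg hx.not_ge

theorem isLocalMax_heaviside (x₀ : ℝ) : IsLocalMax heaviside x₀ := by
  rcases le_or_gt 0 x₀ with hx₀ | hx₀
  · refine Eventually.of_forall fun x => ?_
    simp only [heaviside, if_pos hx₀]
    split_ifs <;> norm_num
  · filter_upwards [Iio_mem_nhds hx₀] with x hx
    rw [heaviside_eq_zero_of_neg hx, heaviside_eq_zero_of_neg hx₀]

theorem not_continuousAt_heaviside_zero : ¬ ContinuousAt heaviside 0 := by
  intro h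
  have hleft : Tendsto heaviside (𝓝[<] 0) (𝓝 0) :=
    tendsto_const_nhds.congr' <| eventually_nhdsWithin_of_forall fun x hx =>
      (heaviside_eq_zero_of_neg hx).symm
  have hone : heaviside 0 = 1 := if_pos le_rfl
  have := tendsto_nhds_unique (h.tendsto.mono_left nhdsWithin_le_nhds) hleft
  norm_num [hone] at this

/-- The Heaviside-type function has pointwise semi-Lipschitz constant 0 everywhere
(target (ℝ,d_u)), but is not continuous at 0 for the usual metric. -/
theorem heaviside_SLip_zero_not_continuous :
    let f : ℝ → ℝ := fun x => if 0 ≤ x then 1 else 0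
    (∀ x₀ : ℝ,
      Filter.limsup (fun x => ENNReal.ofReal (max (f x - f x₀) 0 / |x - x₀|)) (𝓝[≠] x₀) = 0)
    ∧ ¬ ContinuousAt f 0 :=
  ⟨fun x₀ => limsup_ofReal_max_sub_div_eq_zero <|
      nhdsWithin_le_nhds (isLocalMax_heaviside x₀),
    not_continuousAt_heaviside_zero⟩
end

section
/- (Length lemma) Let (X,d) be a metric space and f : X → ℝ a continuous function with K := sup_{x∈X} SLip f(x) < ∞ (where SLip is computed with target (ℝ, d_u)). If γ : [a,b] → X is a continuous rectifiable curve with γ(a) = x and γ(b) = y, then f(y) - f(x) ≤ K · ℓ(γ). -/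
open scoped ENNReal
open Filter Topology

/-- The pointwise semi-Lipschitz constant of f : X → ℝ at x₀, with target (ℝ, d_u). -/
noncomputable def SLipE {X : Type*} [MetricSpace X] (f : X → ℝ) (x₀ : X) : ℝ≥0∞ :=
  sInf {α : ℝ≥0∞ | ∃ δ > (0:ℝ), ∀ x, dist x₀ x < δ →
    ENNReal.ofReal (f x - f x₀) ≤ α * ENNReal.ofReal (dist x₀ x)}

/-! For `α > K` let `V t` be the length of `γ` on `[a, t]`; it is continuous because `γ` is.
Since `SLip f (γ c) < α` and `d(γ c, γ t) ≤ V t - V c`, the inequality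
`f (γ t) - f (γ a) ≤ α V t` propagates from any `c` to a right neighbourhood of `c`; both sides
being continuous, continuous induction carries it from `a` to `b`. Then let `α ↓ K`. -/

open Set

theorem SLipE.eventually_sub_le_mul_dist {X : Type*} [MetricSpace X] {f : X → ℝ} {x₀ : X}
    {α : ℝ} (h : SLipE f x₀ < ENNReal.ofReal α) :
    ∀ᶠ x in 𝓝 x₀, f x - f x₀ ≤ α * dist x₀ x := by
  obtain ⟨β, ⟨δ, hδ, hβ⟩, hβα⟩ := sInf_lt_iff.1 h
  have hα : 0 ≤ α := ENNReal.ofReal_pos.1 (hβα.trans_le' bot_le) |>.le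
  filter_upwards [Metric.ball_mem_nhds x₀ hδ] with x hx
  have : ENNReal.ofReal (f x - f x₀) ≤ ENNReal.ofReal (α * dist x₀ x) := by
    rw [ENNReal.ofReal_mul hα]
    exact (hβ x (by rwa [dist_comm])).trans (mul_le_mul_left hβα.le _)
  rcases ENNReal.ofReal_le_ofReal_iff'.1 this with h | h
  · exact h
  · exact h.trans (by positivity)

namespace variationOnFromTo

variable {α E : Type*} [LinearOrder α] [PseudoMetricSpace E] {f : α → E} {s : Set α}
  {a b c : α}

theorem dist_le_sub_of_le (hf : LocallyBoundedVariationOn f s) (as : a ∈ s) (bs : b ∈ s)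
    (cs : c ∈ s) (bc : b ≤ c) :
    dist (f b) (f c) ≤ variationOnFromTo f s a c - variationOnFromTo f s a b := by
  rw [variationOnFromTo.sub_right hf as cs bs, variationOnFromTo.eq_of_le f s bc, dist_edist]
  exact ENNReal.toReal_mono (hf b c bs cs)
    (eVariationOn.edist_le f ⟨bs, le_rfl, bc⟩ ⟨cs, bc, le_rfl⟩)

theorem continuousOn [TopologicalSpace α] [OrderTopology α] (hf : LocallyBoundedVariationOn f s)
    (hc : ContinuousOn f s) (as : a ∈ s) :
    ContinuousOn (variationOnFromTo f s a) s := by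
  intro b bs
  have left : ContinuousWithinAt (variationOnFromTo f s a) (s ∩ Iio b) b := by
    simpa [ContinuousWithinAt] using tendsto_left as bs hf ((hc b bs).mono inter_subset_left)
  have right : ContinuousWithinAt (variationOnFromTo f s a) (s ∩ Ioi b) b := by
    simpa [ContinuousWithinAt] using tendsto_right as bs hf ((hc b bs).mono inter_subset_left)
  refine (continuousWithinAt_insert_self.2 (left.union right)).mono fun x xs => ?_
  rcases lt_trichotomy x b with h | rfl | h
  exacts [Or.inr (Or.inl ⟨xs, h⟩), Or.inl rfl, Or.inr (Or.inr ⟨xs, h⟩)]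

end variationOnFromTo

theorem sub_le_sub_of_forall_eventually_nhdsGT {α : Type*} [ConditionallyCompleteLinearOrder α]
    [TopologicalSpace α] [OrderTopology α] [DenselyOrdered α] {φ ψ : α → ℝ} {a b : α}
    (hab : a ≤ b) (hφ : ContinuousOn φ (Icc a b)) (hψ : ContinuousOn ψ (Icc a b))
    (h : ∀ c ∈ Ico a b, ∀ᶠ t in 𝓝[>] c, φ t - φ c ≤ ψ t - ψ c) :
    φ b - φ a ≤ ψ b - ψ a := by
  let s := {t | φ t - φ a ≤ ψ t - ψ a}
  have hs : IsClosed (s ∩ Icc a b) := by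
    rw [inter_comm]
    exact isClosed_Icc.isClosed_le (hφ.sub continuousOn_const) (hψ.sub continuousOn_const)
  have hb := hs.Icc_subset_of_forall_mem_nhdsWithin (by simp [s]) fun c ⟨hc, hcI⟩ => by
    filter_upwards [h c hcI] with t ht
    simp only [s, mem_ofPred_eq] at hc ⊢
    linarith
  exact hb (right_mem_Icc.2 hab)

section LengthLemma

variable {X : Type*} [MetricSpace X] {f : X → ℝ} {γ : ℝ → X} {a b : ℝ}

theorem sub_le_mul_variationOnFromTo_of_SLipE_lt (hf : Continuous f) (hab : a ≤ b)
    (hγ : ContinuousOn γ (Icc a b)) (hbv : LocallyBoundedVariationOn γ (Icc a b)) {α : ℝ}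
    (hα : ∀ x, SLipE f x < ENNReal.ofReal α) :
    f (γ b) - f (γ a) ≤ α * variationOnFromTo γ (Icc a b) a b := by
  set V := variationOnFromTo γ (Icc a b) a
  have ha : a ∈ Icc a b := left_mem_Icc.2 hab
  have hα0 : 0 ≤ α := (ENNReal.ofReal_pos.1 ((hα (γ a)).trans_le' bot_le)).le
  have key := sub_le_sub_of_forall_eventually_nhdsGT hab (hf.comp_continuousOn hγ)
    (continuousOn_const.mul (variationOnFromTo.continuousOn hbv hγ ha)) fun c hc => by
      have hcI : c ∈ Icc a b := Ico_subset_Icc_self hc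
      have hIcc : Icc a b ∈ 𝓝[>] c := mem_of_superset (Ico_mem_nhdsGT hc.2)
        (Ico_subset_Icc_self.trans (Icc_subset_Icc_left hc.1))
      have hγc : Tendsto γ (𝓝[>] c) (𝓝 (γ c)) :=
        (hγ c hcI).tendsto.mono_left (nhdsWithin_le_of_mem hIcc)
      filter_upwards [hγc.eventually (SLipE.eventually_sub_le_mul_dist (hα (γ c))), hIcc,
        self_mem_nhdsWithin] with t ht htI htc
      calc f (γ t) - f (γ c) ≤ α * dist (γ c) (γ t) := ht
        _ ≤ α * (V t - V c) := mul_le_mul_of_nonneg_left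
            (variationOnFromTo.dist_le_sub_of_le hbv ha hcI htI (le_of_lt htc)) hα0
        _ = α * V t - α * V c := mul_sub _ _ _
  simpa [V, variationOnFromTo.self] using key

theorem sub_le_mul_variationOnFromTo_of_SLipE_le (hf : Continuous f) (hab : a ≤ b)
    (hγ : ContinuousOn γ (Icc a b)) (hbv : LocallyBoundedVariationOn γ (Icc a b)) {K : ℝ}
    (hK0 : 0 ≤ K) (hK : ∀ x, SLipE f x ≤ ENNReal.ofReal K) :
    f (γ b) - f (γ a) ≤ K * variationOnFromTo γ (Icc a b) a b := by
  have hlim : Tendsto (· * variationOnFromTo γ (Icc a b) a b) (𝓝[>] K)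
      (𝓝 (K * variationOnFromTo γ (Icc a b) a b)) :=
    ((continuous_mul_const _).tendsto K).mono_left nhdsWithin_le_nhds
  refine ge_of_tendsto hlim (eventually_nhdsWithin_of_forall fun α (hα : K < α) => ?_)
  exact sub_le_mul_variationOnFromTo_of_SLipE_lt hf hab hγ hbv fun x =>
    (hK x).trans_lt ((ENNReal.ofReal_lt_ofReal_iff (hK0.trans_lt hα)).2 hα)

end LengthLemma

/-- (Length lemma) If f is continuous with sup SLip f ≤ K and γ is a continuous
rectifiable curve from x to y, then f(y) - f(x) ≤ K·ℓ(γ). -/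
theorem length_lemma {X : Type*} [MetricSpace X] (f : X → ℝ) (hf : Continuous f)
    (K : ℝ) (hK0 : 0 ≤ K) (hK : ∀ x, SLipE f x ≤ ENNReal.ofReal K)
    (a b : ℝ) (hab : a ≤ b) (γ : ℝ → X) (hγ : ContinuousOn γ (Set.Icc a b))
    (hrect : eVariationOn γ (Set.Icc a b) ≠ ⊤) :
    ENNReal.ofReal (f (γ b) - f (γ a)) ≤ ENNReal.ofReal K * eVariationOn γ (Set.Icc a b) := by
  have hbv : BoundedVariationOn γ (Icc a b) := hrect
  have key := sub_le_mul_variationOnFromTo_of_SLipE_le hf hab hγ hbv.locallyBoundedVariationOn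
    hK0 hK
  rw [variationOnFromTo.eq_of_le _ _ hab, inter_self] at key
  calc ENNReal.ofReal (f (γ b) - f (γ a))
      ≤ ENNReal.ofReal (K * (eVariationOn γ (Icc a b)).toReal) := ENNReal.ofReal_le_ofReal key
    _ = ENNReal.ofReal K * eVariationOn γ (Icc a b) := by
      rw [ENNReal.ofReal_mul hK0, ENNReal.ofReal_toReal hrect]
end

section
/- If (X,d) is a quasi-convex metric space with constant K, then every continuous function f : X → ℝ with sup_{x∈X} SLip f(x) =: L < ∞ (SLip computed with target (ℝ,d_u)) is (K·L)-Lipschitz; in particular LIP(X) = D(X) = D_SL(X) as sets of real functions. -/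
/-! If `SLip f < C` everywhere, then `f` grows by at most `C` times the length along any
continuous curve `γ : [a, b] → X`. Indeed, let `T` be the supremum of the times `t` up to which
`f (γ t) - f (γ a) ≤ C · ℓ(γ|[a, t])`. Since the lengths increase with `t` and `f ∘ γ` is
continuous, the bound still holds at `T`, and if `T < b` the pointwise bound `SLip f (γ T) < C`
pushes it a little beyond `T`. Hence `T = b`. Joining two points by a curve of length at most
`K · d(x, y)` and letting `C` decrease to `L` gives the Lipschitz constant `K · L`. -/

open scoped ENNReal
open Filter Topology

open Set

theorem exists_ofReal_sub_le_mul_of_SLipE_lt {X : Type*} [MetricSpace X] {f : X → ℝ} {x : X}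
    {C : ℝ≥0∞} (hC : SLipE f x < C) :
    ∃ δ > (0:ℝ), ∀ y, dist x y < δ →
      ENNReal.ofReal (f y - f x) ≤ C * ENNReal.ofReal (dist x y) := by
  obtain ⟨α, ⟨δ, hδ, hα⟩, hαC⟩ := sInf_lt_iff.mp hC
  exact ⟨δ, hδ, fun y hy => (hα y hy).trans (mul_le_mul_left hαC.le _)⟩

theorem exists_gt_ofReal_sub_le_mul_eVariationOn {X : Type*} [MetricSpace X] {f : X → ℝ}
    {C : ℝ≥0∞} {γ : ℝ → X} {t b : ℝ} (htb : t < b) (hγ : ContinuousWithinAt γ (Icc t b) t)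
    (hC : SLipE f (γ t) < C) :
    ∃ t' ∈ Ioc t b, ENNReal.ofReal (f (γ t') - f (γ t)) ≤ C * eVariationOn γ (Icc t t') := by
  obtain ⟨δ, hδ, hslope⟩ := exists_ofReal_sub_le_mul_of_SLipE_lt hC
  have := left_nhdsWithin_Ioc_neBot htb
  obtain ⟨t', ht', hclose⟩ := (eventually_mem_nhdsWithin.and
    ((hγ.mono Ioc_subset_Icc_self).eventually (Metric.ball_mem_nhds _ hδ))).exists
  refine ⟨t', ht', (hslope _ (by rwa [dist_comm])).trans (mul_le_mul_right ?_ _)⟩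
  rw [← edist_dist]
  exact eVariationOn.edist_le γ (left_mem_Icc.mpr ht'.1.le) (right_mem_Icc.mpr ht'.1.le)

theorem ofReal_sub_le_mul_eVariationOn_of_SLipE_lt {X : Type*} [MetricSpace X] {f : X → ℝ}
    (hf : Continuous f) {C : ℝ≥0∞} (hC : ∀ x, SLipE f x < C) {γ : ℝ → X} {a b : ℝ}
    (hab : a ≤ b) (hγ : ContinuousOn γ (Icc a b)) :
    ENNReal.ofReal (f (γ b) - f (γ a)) ≤ C * eVariationOn γ (Icc a b) := by
  set g : ℝ → ℝ≥0∞ := fun t => ENNReal.ofReal (f (γ t) - f (γ a))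
  set S := {t ∈ Icc a b | g t ≤ C * eVariationOn γ (Icc a t)}
  have haS : a ∈ S := ⟨left_mem_Icc.mpr hab, by simp [g]⟩
  have hS : BddAbove S := ⟨b, fun t ht => ht.1.2⟩
  set T := sSup S
  have hT : T ∈ Icc a b := ⟨le_csSup hS haS, csSup_le ⟨a, haS⟩ fun t ht => ht.1.2⟩
  -- Every `t ∈ S` satisfies the bound with the larger variation on `[a, T]`, a closed condition.
  have hTS : T ∈ S := by
    refine ⟨hT, ContinuousWithinAt.closure_le (csSup_mem_closure ⟨a, haS⟩ hS) ?_
      continuousWithinAt_const fun t ht => ht.2.trans ?_⟩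
    · exact (ENNReal.continuous_ofReal.comp_continuousOn
        ((hf.comp_continuousOn hγ).sub continuousOn_const) T hT).mono fun t ht => ht.1
    · exact mul_le_mul_right (eVariationOn.mono γ (Icc_subset_Icc_right (le_csSup hS ht))) _
  suffices T = b from this ▸ hTS.2
  by_contra hTb
  have hTb : T < b := lt_of_le_of_ne hT.2 hTb
  obtain ⟨t', ht', hstep⟩ := exists_gt_ofReal_sub_le_mul_eVariationOn hTb
    ((hγ T hT).mono (Icc_subset_Icc_left hT.1)) (hC (γ T))
  have ht'S : t' ∈ S := by
    refine ⟨⟨hT.1.trans ht'.1.le, ht'.2⟩, ?_⟩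
    have hadd : eVariationOn γ (Icc a T) + eVariationOn γ (Icc T t') =
        eVariationOn γ (Icc a t') := by
      simpa only [univ_inter] using
        eVariationOn.Icc_add_Icc γ (s := univ) hT.1 ht'.1.le (mem_univ T)
    calc g t' = ENNReal.ofReal ((f (γ t') - f (γ T)) + (f (γ T) - f (γ a))) := by
          rw [sub_add_sub_cancel]
      _ ≤ ENNReal.ofReal (f (γ t') - f (γ T)) + g T := ENNReal.ofReal_add_le
      _ ≤ C * eVariationOn γ (Icc T t') + C * eVariationOn γ (Icc a T) := add_le_add hstep hTS.2
      _ = C * eVariationOn γ (Icc a t') := by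
          rw [← mul_add, add_comm, hadd]
  exact (le_csSup hS ht'S).not_gt ht'.1

theorem sub_le_mul_of_SLipE_le {X : Type*} [MetricSpace X] {f : X → ℝ} (hf : Continuous f)
    {L : ℝ} (hL : 0 ≤ L) (hSL : ∀ x, SLipE f x ≤ ENNReal.ofReal L) {γ : ℝ → X} {a b M : ℝ}
    (hab : a ≤ b) (hγ : ContinuousOn γ (Icc a b)) (hM : 0 ≤ M)
    (hlen : eVariationOn γ (Icc a b) ≤ ENNReal.ofReal M) :
    f (γ b) - f (γ a) ≤ L * M := by
  have hbound : ∀ L' ∈ Ioi L, f (γ b) - f (γ a) ≤ L' * M := by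
    intro L' (hL' : L < L')
    have hL'0 : 0 ≤ L' := hL.trans hL'.le
    have hC : ∀ x, SLipE f x < ENNReal.ofReal L' := fun x =>
      (hSL x).trans_lt ((ENNReal.ofReal_lt_ofReal_iff_of_nonneg hL).mpr hL')
    refine (ENNReal.ofReal_le_ofReal_iff (mul_nonneg hL'0 hM)).mp ?_
    calc ENNReal.ofReal (f (γ b) - f (γ a))
        ≤ ENNReal.ofReal L' * eVariationOn γ (Icc a b) :=
          ofReal_sub_le_mul_eVariationOn_of_SLipE_lt hf hC hab hγ
      _ ≤ ENNReal.ofReal L' * ENNReal.ofReal M := mul_le_mul_right hlen _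
      _ = ENNReal.ofReal (L' * M) := (ENNReal.ofReal_mul hL'0).symm
  exact ge_of_tendsto ((continuous_mul_const M).continuousWithinAt (s := Ioi L)).tendsto
    (eventually_nhdsWithin_of_forall hbound)

/-- On a quasi-convex metric space with constant K, every continuous function with
sup SLip f ≤ L is (K·L)-Lipschitz. -/
theorem lipschitz_of_quasiconvex {X : Type*} [MetricSpace X] (K L : ℝ)
    (hK : 0 < K) (hL : 0 ≤ L)
    (hqc : ∀ x y : X, ∃ γ : ℝ → X, ContinuousOn γ (Set.Icc 0 1) ∧ γ 0 = x ∧ γ 1 = y ∧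
      eVariationOn γ (Set.Icc 0 1) ≤ ENNReal.ofReal (K * dist x y))
    (f : X → ℝ) (hf : Continuous f) (hSL : ∀ x, SLipE f x ≤ ENNReal.ofReal L) :
    LipschitzWith (Real.toNNReal (K * L)) f := by
  refine LipschitzWith.of_le_add_mul' _ fun x y => ?_
  obtain ⟨γ, hγ, hγy, hγx, hlen⟩ := hqc y x
  have h := sub_le_mul_of_SLipE_le hf hL hSL zero_le_one hγ (by positivity) hlen
  rw [hγx, hγy, dist_comm] at h
  linarith
end

section
/- Let ℝ carry the quasi-metric d_F(x,x') = |x-x'| + φ(x) - φ(x') where φ(x) = ∫₀ˣ t²/(1+t²) dt. Then d_F is a quasi-metric on ℝ and its index of symmetry is 0; indeed the ratio d_F(x,x+1)/d_F(x+1,x) = (arctan(x+1)-arctan(x))/(2 + arctan(x) - arctan(x+1)) tends to 0 as x → +∞. -/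
open Filter Topology

/-!
Since `t²/(1+t²) = 1 - 1/(1+t²)`, the potential is `φ x = x - arctan x`, which is monotone and
1-Lipschitz; so `|x - y| + φ x - φ y` is a quasi-metric. Along `x ↦ (x, x + 1)` the forward
distance `arctan (x + 1) - arctan x` tends to `0` while the backward one tends to `2`, so the
ratios of reversed distances accumulate at `0`, which is therefore their infimum.
-/

section Randers

def randersDist (ψ : ℝ → ℝ) (x y : ℝ) : ℝ := |x - y| + ψ x - ψ y

variable (ψ : ℝ → ℝ)

@[simp]
theorem randersDist_self (x : ℝ) : randersDist ψ x x = 0 := by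
  simp [randersDist]

theorem randersDist_add_randersDist_comm (x y : ℝ) :
    randersDist ψ x y + randersDist ψ y x = 2 * |x - y| := by
  rw [randersDist, randersDist, abs_sub_comm y x]
  ring

theorem randersDist_triangle (x y z : ℝ) :
    randersDist ψ x z ≤ randersDist ψ x y + randersDist ψ y z := by
  have := abs_sub_le x y z
  simp only [randersDist]
  linarith

theorem eq_of_randersDist_eq_zero {x y : ℝ} (hxy : randersDist ψ x y = 0)
    (hyx : randersDist ψ y x = 0) : x = y := by
  have := randersDist_add_randersDist_comm ψ x y
  rw [hxy, hyx] at this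
  linarith [abs_eq_zero.mp (by linarith : |x - y| = 0)]

variable {ψ}

theorem randersDist_nonneg (hψ : LipschitzWith 1 ψ) (x y : ℝ) : 0 ≤ randersDist ψ x y := by
  have := hψ.dist_le_mul y x
  rw [NNReal.coe_one, one_mul, Real.dist_eq, Real.dist_eq, abs_sub_comm y x] at this
  have := le_abs_self (ψ y - ψ x)
  simp only [randersDist]
  linarith

theorem randersDist_pos_of_monotone (hψ : Monotone ψ) {x y : ℝ} (h : y < x) :
    0 < randersDist ψ x y := by
  have := hψ h.le
  rw [randersDist, abs_of_pos (sub_pos.mpr h)]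
  linarith

end Randers

theorem csInf_eq_of_forall_ge_of_tendsto {α ι : Type*} [ConditionallyCompleteLinearOrder α]
    [TopologicalSpace α] [OrderTopology α] {S : Set α} {b : α} (hb : ∀ r ∈ S, b ≤ r)
    {l : Filter ι} [l.NeBot] {f : ι → α} (hfS : ∀ i, f i ∈ S) (hf : Tendsto f l (𝓝 b)) :
    sInf S = b :=
  csInf_eq_of_forall_ge_of_forall_gt_exists_lt ⟨_, hfS l.nonempty_of_neBot.some⟩ hb
    fun _ hw =>
      let ⟨i, hi⟩ := (hf.eventually (gt_mem_nhds hw)).exists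
      ⟨f i, hfS i, hi⟩

section SubArctan

open Real

theorem hasDerivAt_sub_arctan (x : ℝ) :
    HasDerivAt (fun t => t - arctan t) (x ^ 2 / (1 + x ^ 2)) x := by
  refine ((hasDerivAt_id' x).sub (hasDerivAt_arctan x)).congr_deriv ?_
  field_simp
  ring

theorem deriv_sub_arctan : deriv (fun t => t - arctan t) = fun x => x ^ 2 / (1 + x ^ 2) :=
  funext fun x => (hasDerivAt_sub_arctan x).deriv

theorem differentiable_sub_arctan : Differentiable ℝ fun t => t - arctan t :=
  fun x => (hasDerivAt_sub_arctan x).differentiableAt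

theorem integral_sq_div_one_add_sq (a b : ℝ) :
    ∫ t in a..b, t ^ 2 / (1 + t ^ 2) = b - arctan b - (a - arctan a) := by
  refine intervalIntegral.integral_eq_sub_of_hasDerivAt (fun x _ => hasDerivAt_sub_arctan x) ?_
  exact (continuous_pow 2 |>.div (by fun_prop) fun t => by positivity).intervalIntegrable _ _

theorem monotone_sub_arctan : Monotone fun t => t - arctan t :=
  monotone_of_deriv_nonneg differentiable_sub_arctan fun x => by
    rw [deriv_sub_arctan]
    positivity

theorem lipschitzWith_sub_arctan : LipschitzWith 1 fun t => t - arctan t :=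
  lipschitzWith_of_nnnorm_deriv_le differentiable_sub_arctan fun x => by
    rw [← NNReal.coe_le_coe, coe_nnnorm, deriv_sub_arctan, Real.norm_eq_abs, NNReal.coe_one,
      abs_of_nonneg (by positivity), div_le_one (by positivity)]
    linarith

theorem randersDist_sub_arctan_self_add_one (x : ℝ) :
    randersDist (fun t => t - arctan t) x (x + 1) = arctan (x + 1) - arctan x := by
  rw [randersDist, sub_add_cancel_left, abs_neg, abs_one]
  ring

theorem randersDist_sub_arctan_add_one_self (x : ℝ) :
    randersDist (fun t => t - arctan t) (x + 1) x = 2 + arctan x - arctan (x + 1) := by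
  rw [randersDist, add_sub_cancel_left, abs_one]
  ring

theorem tendsto_arctan_add_one_sub_arctan :
    Tendsto (fun x => arctan (x + 1) - arctan x) atTop (𝓝 0) := by
  have h := tendsto_nhds_of_tendsto_nhdsWithin tendsto_arctan_atTop
  simpa using (h.comp (tendsto_atTop_add_const_right _ 1 tendsto_id)).sub h

end SubArctan

/-- The Randers-type quasi-metric d_F(x,x') = |x-x'| + φ(x) - φ(x') on ℝ, with
φ(x) = ∫₀ˣ t²/(1+t²) dt, is a quasi-metric whose index of symmetry is 0; indeed the
ratio d_F(x,x+1)/d_F(x+1,x) equals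
(arctan(x+1)-arctan x)/(2+arctan x - arctan(x+1)) which tends to 0 as x → ∞. -/
theorem randers_index_zero :
    let φ : ℝ → ℝ := fun x => ∫ t in (0:ℝ)..x, t ^ 2 / (1 + t ^ 2)
    let dF : ℝ → ℝ → ℝ := fun x y => |x - y| + φ x - φ y
    (∀ x, dF x x = 0) ∧ (∀ x y, 0 ≤ dF x y) ∧
    (∀ x y, dF x y = 0 → dF y x = 0 → x = y) ∧
    (∀ x y z, dF x z ≤ dF x y + dF y z) ∧
    (∀ x : ℝ, dF x (x + 1) / dF (x + 1) x
        = (Real.arctan (x + 1) - Real.arctan x) / (2 + Real.arctan x - Real.arctan (x + 1))) ∧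
    Filter.Tendsto (fun x => dF x (x + 1) / dF (x + 1) x) Filter.atTop (𝓝 0) ∧
    sInf {r : ℝ | ∃ x y, 0 < dF x y ∧ r = dF y x / dF x y} = 0 := by
  intro φ dF
  have hdF : ∀ x y, dF x y = randersDist (fun t => t - Real.arctan t) x y := fun x y => by
    simp only [dF, φ, integral_sq_div_one_add_sq, randersDist, Real.arctan_zero, sub_zero]
  have hratio : ∀ x : ℝ, dF x (x + 1) / dF (x + 1) x
      = (Real.arctan (x + 1) - Real.arctan x) / (2 + Real.arctan x - Real.arctan (x + 1)) :=
    fun x => by rw [hdF, hdF, randersDist_sub_arctan_self_add_one,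
      randersDist_sub_arctan_add_one_self]
  have hlim : Tendsto (fun x => dF x (x + 1) / dF (x + 1) x) atTop (𝓝 0) := by
    simp only [hratio]
    have hden := tendsto_arctan_add_one_sub_arctan.const_sub 2
    simp only [sub_sub_eq_add_sub, sub_zero] at hden
    have := tendsto_arctan_add_one_sub_arctan.div hden two_ne_zero
    rwa [zero_div] at this
  simp only [hdF] at hratio hlim ⊢
  refine ⟨randersDist_self _, randersDist_nonneg lipschitzWith_sub_arctan,
    fun x y => eq_of_randersDist_eq_zero _, randersDist_triangle _, hratio, hlim,
    csInf_eq_of_forall_ge_of_tendsto ?_ (fun x => ⟨x + 1, x, ?_, rfl⟩) hlim⟩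
  · rintro r ⟨x, y, -, rfl⟩
    exact div_nonneg (randersDist_nonneg lipschitzWith_sub_arctan _ _)
      (randersDist_nonneg lipschitzWith_sub_arctan _ _)
  · exact randersDist_pos_of_monotone monotone_sub_arctan (lt_add_one x)
end

section
/- Let (X,d) be a pointwise quasi-symmetric quasi-metric space. Then the identity map id : (X,d) → (X,dˢ) is a C_SL-homeomorphism: both id and its inverse are pointwise semi-Lipschitz and continuous (from the forward topology of the domain quasi-metric to the topology of dˢ). Conversely, if id : (X,d) → (X,dˢ) is a C_SL-homeomorphism then (X,d) is pointwise quasi-symmetric. -/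
/-!
Near `x₀`, quasi-symmetry `d(x, x₀) ≤ α d(x₀, x)` gives `dˢ(x₀, x) ≤ (α + 1) d(x₀, x)`, so `id` is
semi-Lipschitz, hence continuous; `id⁻¹` is `1`-Lipschitz because `d ≤ dˢ`. Conversely,
`d(x, x₀) ≤ dˢ(x₀, x)`, so the semi-Lipschitz bound for `id` is itself a quasi-symmetry bound.
-/

/-- A quasi-metric on a set X. -/
structure QuasiMetric (X : Type*) where
  d : X → X → ℝ
  nonneg : ∀ x y, 0 ≤ d x y
  refl : ∀ x, d x x = 0
  sep : ∀ x y, d x y = 0 → d y x = 0 → x = y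
  triangle : ∀ x y z, d x z ≤ d x y + d y z

theorem exists_forall_lt_of_le_mul {X : Type*} {g f : X → ℝ} (hg : ∀ x, 0 ≤ g x)
    (h : ∃ α ≥ (0:ℝ), ∃ δ > (0:ℝ), ∀ x, g x < δ → f x ≤ α * g x) :
    ∀ ε > (0:ℝ), ∃ δ > (0:ℝ), ∀ x, g x < δ → f x < ε := by
  obtain ⟨α, hα, δ, hδ, hbound⟩ := h
  intro ε hε
  have hα₁ : 0 < α + 1 := by linarith
  refine ⟨min δ (ε / (α + 1)), lt_min hδ (div_pos hε hα₁), fun x hx => ?_⟩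
  have hx_small : (α + 1) * g x < ε := by
    rw [mul_comm, ← lt_div_iff₀ hα₁]
    exact hx.trans_le (min_le_right _ _)
  calc f x ≤ α * g x := hbound x (hx.trans_le (min_le_left _ _))
    _ ≤ (α + 1) * g x := by nlinarith [hg x]
    _ < ε := hx_small

namespace QuasiMetric

variable {X : Type*} (q : QuasiMetric X)

theorem exists_max_le_mul_of_quasiSymmetricAt {x₀ : X}
    (h : ∃ α ≥ (0:ℝ), ∃ δ > (0:ℝ), ∀ x, q.d x₀ x < δ → q.d x x₀ ≤ α * q.d x₀ x) :
    ∃ α ≥ (0:ℝ), ∃ δ > (0:ℝ), ∀ x, q.d x₀ x < δ →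
      max (q.d x₀ x) (q.d x x₀) ≤ α * q.d x₀ x := by
  obtain ⟨α, hα, δ, hδ, hbound⟩ := h
  refine ⟨α + 1, by linarith, δ, hδ, fun x hx => max_le ?_ ?_⟩
  · nlinarith [q.nonneg x₀ x]
  · nlinarith [q.nonneg x₀ x, hbound x hx]

end QuasiMetric

/-- (X,d) is pointwise quasi-symmetric iff the identity id : (X,d) → (X,dˢ) is a
C_SL-homeomorphism: id and id⁻¹ are pointwise semi-Lipschitz at every point and
continuous (forward topology on the domain, symmetrized topology on the target). -/
theorem pointwise_quasi_symmetric_iff_id_CSL_homeo {X : Type*} (q : QuasiMetric X) :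
    (∀ x₀ : X, ∃ α ≥ (0:ℝ), ∃ δ > (0:ℝ), ∀ x, q.d x₀ x < δ → q.d x x₀ ≤ α * q.d x₀ x)
    ↔
    ((∀ x₀ : X, ∃ α ≥ (0:ℝ), ∃ δ > (0:ℝ), ∀ x, q.d x₀ x < δ →
        max (q.d x₀ x) (q.d x x₀) ≤ α * q.d x₀ x)
    ∧ (∀ x₀ : X, ∀ ε > (0:ℝ), ∃ δ > (0:ℝ), ∀ x, q.d x₀ x < δ →
        max (q.d x₀ x) (q.d x x₀) < ε)
    ∧ (∀ x₀ : X, ∃ α ≥ (0:ℝ), ∃ δ > (0:ℝ), ∀ x, max (q.d x₀ x) (q.d x x₀) < δ →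
        q.d x₀ x ≤ α * max (q.d x₀ x) (q.d x x₀))
    ∧ (∀ x₀ : X, ∀ ε > (0:ℝ), ∃ δ > (0:ℝ), ∀ x, max (q.d x₀ x) (q.d x x₀) < δ →
        max (q.d x₀ x) (q.d x x₀) < ε)) := by
  constructor
  · intro h
    have id_semiLipschitz := fun x₀ => q.exists_max_le_mul_of_quasiSymmetricAt (h x₀)
    refine ⟨id_semiLipschitz,
      fun x₀ => exists_forall_lt_of_le_mul (q.nonneg x₀) (id_semiLipschitz x₀),
      fun x₀ => ⟨1, zero_le_one, 1, one_pos, fun x _ => by rw [one_mul]; exact le_max_left _ _⟩,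
      fun x₀ ε hε => ⟨ε, hε, fun _ => id⟩⟩
  · rintro ⟨id_semiLipschitz, -, -, -⟩ x₀
    obtain ⟨α, hα, δ, hδ, hbound⟩ := id_semiLipschitz x₀
    exact ⟨α, hα, δ, hδ, fun x hx => (le_max_right _ _).trans (hbound x hx)⟩
end

section
/- Let (X,d) be a pointwise quasi-symmetric quasi-metric space, and fix q ∈ X. Then the function f_q(y) = min{d(q,y), 1} is pointwise semi-Lipschitz from (X,d) to (ℝ,|·|): for every y₀ there exists α such that SLip f_q(y₀) ≤ max{1,α}, where α is the quasi-symmetry constant at y₀. In particular, if σ(y₀) ≤ K for all y₀, then sup_y SLip f_q(y) ≤ max{1,K}. -/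
namespace QuasiMetric

variable {X : Type*} (q : QuasiMetric X)

theorem abs_sub_le_max (p y₀ y : X) :
    |q.d p y - q.d p y₀| ≤ max (q.d y₀ y) (q.d y y₀) := by
  rw [abs_sub_le_iff]
  constructor
  · linarith [q.triangle p y₀ y, le_max_left (q.d y₀ y) (q.d y y₀)]
  · linarith [q.triangle p y y₀, le_max_right (q.d y₀ y) (q.d y y₀)]

theorem max_le_mul_of_le_mul {y₀ y : X} {α : ℝ} (h : q.d y y₀ ≤ α * q.d y₀ y) :
    max (q.d y₀ y) (q.d y y₀) ≤ max 1 α * q.d y₀ y := by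
  rw [max_mul_of_nonneg _ _ (q.nonneg y₀ y), one_mul]
  exact max_le_max le_rfl h

theorem abs_min_one_sub_le {y₀ y : X} {α : ℝ} (p : X) (h : q.d y y₀ ≤ α * q.d y₀ y) :
    |min (q.d p y) 1 - min (q.d p y₀) 1| ≤ max 1 α * q.d y₀ y :=
  calc |min (q.d p y) 1 - min (q.d p y₀) 1|
      ≤ max |q.d p y - q.d p y₀| |(1 : ℝ) - 1| := abs_min_sub_min_le_max _ _ _ _
    _ = |q.d p y - q.d p y₀| := by rw [sub_self, abs_zero, max_eq_left (abs_nonneg _)]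
    _ ≤ max (q.d y₀ y) (q.d y y₀) := q.abs_sub_le_max p y₀ y
    _ ≤ max 1 α * q.d y₀ y := q.max_le_mul_of_le_mul h

end QuasiMetric

theorem fq_pointwise_semiLipschitz_general {X : Type*} (q : QuasiMetric X)
    (p : X) :
    let f : X → ℝ := fun y => min (q.d p y) 1
    (∀ y₀ : X, ∀ α ≥ (0:ℝ),
      (∃ δ > (0:ℝ), ∀ y, q.d y₀ y < δ → q.d y y₀ ≤ α * q.d y₀ y) →
      ∃ δ > (0:ℝ), ∀ y, q.d y₀ y < δ → |f y - f y₀| ≤ max 1 α * q.d y₀ y)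
    ∧ (∀ K ≥ (0:ℝ),
      (∀ y₀ : X, ∃ δ > (0:ℝ), ∀ y, q.d y₀ y < δ → q.d y y₀ ≤ K * q.d y₀ y) →
      ∀ y₀ : X, ∃ δ > (0:ℝ), ∀ y, q.d y₀ y < δ → |f y - f y₀| ≤ max 1 K * q.d y₀ y) := by
  intro f
  have pointwise : ∀ (y₀ : X) (α : ℝ),
      (∃ δ > (0:ℝ), ∀ y, q.d y₀ y < δ → q.d y y₀ ≤ α * q.d y₀ y) →
      ∃ δ > (0:ℝ), ∀ y, q.d y₀ y < δ → |f y - f y₀| ≤ max 1 α * q.d y₀ y := by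
    rintro y₀ α ⟨δ, hδ, hsymm⟩
    exact ⟨δ, hδ, fun y hy => q.abs_min_one_sub_le p (hsymm y hy)⟩
  exact ⟨fun y₀ α _ => pointwise y₀ α, fun K _ hK y₀ => pointwise y₀ K (hK y₀)⟩

/-- On a pointwise quasi-symmetric quasi-metric space, f_q(y) = min{d(q,y),1} is
pointwise semi-Lipschitz to (ℝ,|·|), with SLip f_q(y₀) ≤ max{1, α} for any
quasi-symmetry constant α at y₀; uniformly if σ ≤ K globally. -/
theorem fq_pointwise_semiLipschitz {X : Type*} (q : QuasiMetric X)
    (hpqs : ∀ y₀ : X, ∃ α ≥ (0:ℝ), ∃ δ > (0:ℝ), ∀ y,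
      q.d y₀ y < δ → q.d y y₀ ≤ α * q.d y₀ y)
    (p : X) :
    let f : X → ℝ := fun y => min (q.d p y) 1
    (∀ y₀ : X, ∀ α ≥ (0:ℝ),
      (∃ δ > (0:ℝ), ∀ y, q.d y₀ y < δ → q.d y y₀ ≤ α * q.d y₀ y) →
      ∃ δ > (0:ℝ), ∀ y, q.d y₀ y < δ → |f y - f y₀| ≤ max 1 α * q.d y₀ y)
    ∧ (∀ K ≥ (0:ℝ),
      (∀ y₀ : X, ∃ δ > (0:ℝ), ∀ y, q.d y₀ y < δ → q.d y y₀ ≤ K * q.d y₀ y) →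
      ∀ y₀ : X, ∃ δ > (0:ℝ), ∀ y, q.d y₀ y < δ → |f y - f y₀| ≤ max 1 K * q.d y₀ y) :=
  fq_pointwise_semiLipschitz_general q p
end

section
/- Let (X,d) be a uniformly locally radially quasi-convex metric space with constant K, let f : X → ℝ be continuous with sup_x SLip f(x) < ∞, and let γ : [a,b] → X be a rectifiable curve parametrized by arc-length. Then for almost every t ∈ [a,b] the function f ∘ γ is differentiable, and |f(γ(a)) - f(γ(b))| ≤ ∫_a^b |∂f|⁺(γ(t)) dt; i.e., the ascendent slope |∂f|⁺ is an upper gradient of f. -/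
/-!
An arc-length parametrization makes `γ` 1-Lipschitz on `[a, b]`, so a bound `r` on the ascendent
slope at `γ x` gives `g z - g x ≤ r |z - x|` for `z` near `x`, where `g = f ∘ γ`. Such a one-sided
local bound, uniform thanks to `sup |∂f|⁺ < ∞`, controls the upper right Dini derivative of the
continuous function `g` and of its reflection, so `g` is Lipschitz, hence absolutely continuous:
`g'` exists a.e. and `g b - g a = ∫ g'`. At interior points of differentiability the same local
bound, with `r` just above `|∂f|⁺ (γ t)`, gives `|g' t| ≤ |∂f|⁺ (γ t)`.
-/

open scoped ENNReal NNReal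
open Filter Topology MeasureTheory Set

/-- The ascendent metric slope |∂f|⁺(x), valued in [0,∞]. -/
noncomputable def slopePlus {X : Type*} [MetricSpace X] (f : X → ℝ) (x : X) : ℝ≥0∞ :=
  Filter.limsup (fun y => ENNReal.ofReal (max (f y - f x) 0 / dist x y)) (𝓝[≠] x)

theorem eventually_sub_le_mul_dist_of_slopePlus_lt {X : Type*} [MetricSpace X] {f : X → ℝ}
    {x : X} {r : ℝ} (h : slopePlus f x < ENNReal.ofReal r) :
    ∀ᶠ y in 𝓝 x, f y - f x ≤ r * dist x y := by
  have hr : 0 < r := ENNReal.ofReal_pos.1 (pos_of_gt h)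
  have hev := eventually_lt_of_limsup_lt h
  rw [eventually_nhdsWithin_iff] at hev
  filter_upwards [hev] with y hy
  rcases eq_or_ne y x with rfl | hyx
  · simp
  · have hd : 0 < dist x y := dist_pos.2 hyx.symm
    rw [ENNReal.ofReal_lt_ofReal_iff hr, div_lt_iff₀ hd] at hy
    exact (le_max_left _ _).trans (hy hyx).le

theorem eventually_comp_sub_le_of_slopePlus_lt {X Y : Type*} [MetricSpace X]
    [PseudoMetricSpace Y] {f : X → ℝ} {γ : Y → X} {s : Set Y} {x : Y} {r : ℝ}
    (hγ : LipschitzOnWith 1 γ s) (hx : x ∈ s) (h : slopePlus f (γ x) < ENNReal.ofReal r) :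
    ∀ᶠ z in 𝓝[s] x, f (γ z) - f (γ x) ≤ r * dist z x := by
  have hr : 0 ≤ r := (ENNReal.ofReal_pos.1 (pos_of_gt h)).le
  have hγx : Tendsto γ (𝓝[s] x) (𝓝 (γ x)) := (hγ.continuousOn x hx).tendsto
  filter_upwards [hγx.eventually (eventually_sub_le_mul_dist_of_slopePlus_lt h),
    self_mem_nhdsWithin] with z hz hzs
  calc f (γ z) - f (γ x) ≤ r * dist (γ x) (γ z) := hz
    _ ≤ r * dist z x := by
      gcongr
      simpa [dist_comm] using hγ.dist_le_mul x hx z hzs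

theorem sub_le_mul_sub_of_eventually_sub_le {g : ℝ → ℝ} {a b M : ℝ} (hab : a ≤ b)
    (hg : ContinuousOn g (Icc a b))
    (h : ∀ x ∈ Icc a b, ∀ r > M, ∀ᶠ z in 𝓝[Icc a b] x, g z - g x ≤ r * dist z x) :
    g b - g a ≤ M * (b - a) := by
  have key : ∀ ⦃x⦄, x ∈ Icc a b → g x ≤ g a + M * (x - a) := by
    refine image_le_of_liminf_slope_right_le_deriv_boundary (B' := fun _ => M) hg (by simp)
      (by fun_prop) (fun x _ => ?_) (fun x hx r hr => ?_)
    · simpa using (((hasDerivWithinAt_id x (Ici x)).sub_const a).const_mul M).const_add (g a)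
    · have hnhds : 𝓝[>] x = 𝓝[Ioo x b] x := (nhdsWithin_Ioo_eq_nhdsGT hx.2).symm
      have hsub : 𝓝[Ioo x b] x ≤ 𝓝[Icc a b] x :=
        nhdsWithin_mono _ fun z hz => ⟨hx.1.trans hz.1.le, hz.2.le⟩
      refine Eventually.frequently ?_
      rw [hnhds]
      filter_upwards [hsub (h x (Ico_subset_Icc_self hx) ((M + r) / 2) (by linarith)),
        self_mem_nhdsWithin] with z hz hzx
      rw [slope_def_field, div_lt_iff₀ (sub_pos.2 hzx.1)]
      rw [Real.dist_eq, abs_of_pos (sub_pos.2 hzx.1)] at hz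
      nlinarith [sub_pos.2 hzx.1]
  linarith [key (right_mem_Icc.2 hab)]

/-- The hypothesis only bounds increases of `g` away from `x`, so a decrease of `g` across
`[a, b]` is controlled by reflecting the interval. -/
theorem sub_le_mul_sub_of_eventually_sub_le' {g : ℝ → ℝ} {a b M : ℝ} (hab : a ≤ b)
    (hg : ContinuousOn g (Icc a b))
    (h : ∀ x ∈ Icc a b, ∀ r > M, ∀ᶠ z in 𝓝[Icc a b] x, g z - g x ≤ r * dist z x) :
    g a - g b ≤ M * (b - a) := by
  have hneg : MapsTo Neg.neg (Icc (-b) (-a)) (Icc a b) := fun x hx =>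
    ⟨le_neg.2 hx.2, neg_le.1 hx.1⟩
  have hreflected : ∀ x ∈ Icc (-b) (-a), ∀ r > M,
      ∀ᶠ z in 𝓝[Icc (-b) (-a)] x, (g ∘ Neg.neg) z - (g ∘ Neg.neg) x ≤ r * dist z x := by
    intro x hx r hr
    have ht : Tendsto Neg.neg (𝓝[Icc (-b) (-a)] x) (𝓝[Icc a b] (-x)) :=
      continuous_neg.continuousWithinAt.tendsto_nhdsWithin hneg
    filter_upwards [ht.eventually (h (-x) (hneg hx) r hr)] with z hz
    simpa [dist_neg_neg] using hz
  have := sub_le_mul_sub_of_eventually_sub_le (neg_le_neg hab)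
    (hg.comp continuous_neg.continuousOn hneg) hreflected
  simp only [Function.comp_apply, neg_neg, sub_neg_eq_add] at this
  linarith

theorem lipschitzOnWith_of_eventually_sub_le {g : ℝ → ℝ} {s : Set ℝ} {M : ℝ≥0}
    (hs : s.OrdConnected) (hg : ContinuousOn g s)
    (h : ∀ x ∈ s, ∀ r > (M : ℝ), ∀ᶠ z in 𝓝[s] x, g z - g x ≤ r * dist z x) :
    LipschitzOnWith M g s := by
  have hIcc : ∀ x ∈ s, ∀ y ∈ s, x ≤ y → dist (g x) (g y) ≤ M * dist x y := by
    intro x hx y hy hxy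
    have hsub : Icc x y ⊆ s := hs.out hx hy
    have hloc : ∀ z ∈ Icc x y, ∀ r > (M : ℝ), ∀ᶠ w in 𝓝[Icc x y] z, g w - g z ≤ r * dist w z :=
      fun z hz r hr => nhdsWithin_mono _ hsub (h z (hsub hz) r hr)
    rw [Real.dist_eq, Real.dist_eq, abs_sub_comm x y, abs_of_nonneg (sub_nonneg.2 hxy), abs_le]
    constructor
    · linarith [sub_le_mul_sub_of_eventually_sub_le hxy (hg.mono hsub) hloc]
    · exact sub_le_mul_sub_of_eventually_sub_le' hxy (hg.mono hsub) hloc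
  refine LipschitzOnWith.of_dist_le_mul fun x hx y hy => ?_
  rcases le_total x y with hxy | hyx
  · exact hIcc x hx y hy hxy
  · rw [dist_comm, dist_comm x]; exact hIcc y hy x hx hyx

theorem abs_deriv_le_of_eventually_sub_le {G : ℝ → ℝ} {t r : ℝ} (hG : DifferentiableAt ℝ G t)
    (h : ∀ᶠ z in 𝓝 t, G z - G t ≤ r * dist z t) : |deriv G t| ≤ r := by
  have hslope : Tendsto (slope G t) (𝓝[≠] t) (𝓝 (deriv G t)) :=
    hasDerivAt_iff_tendsto_slope.mp hG.hasDerivAt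
  rw [abs_le]
  constructor
  · refine ge_of_tendsto (hslope.mono_left (nhdsLT_le_nhdsNE t)) ?_
    filter_upwards [nhdsWithin_le_nhds h, self_mem_nhdsWithin] with z hz (hzt : z < t)
    rw [Real.dist_eq, abs_of_neg (sub_neg.2 hzt)] at hz
    rw [slope_def_field, le_div_iff_of_neg (sub_neg.2 hzt)]
    linarith
  · refine le_of_tendsto (hslope.mono_left (nhdsGT_le_nhdsNE t)) ?_
    filter_upwards [nhdsWithin_le_nhds h, self_mem_nhdsWithin] with z hz (hzt : t < z)
    rw [Real.dist_eq, abs_of_pos (sub_pos.2 hzt)] at hz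
    rw [slope_def_field, div_le_iff₀ (sub_pos.2 hzt)]
    linarith

theorem enorm_deriv_comp_le_slopePlus {X : Type*} [MetricSpace X] {f : X → ℝ} {γ : ℝ → X}
    {s : Set ℝ} {t : ℝ} (hγ : LipschitzOnWith 1 γ s) (hs : s ∈ 𝓝 t)
    (ht : DifferentiableAt ℝ (f ∘ γ) t) : ‖deriv (f ∘ γ) t‖ₑ ≤ slopePlus f (γ t) := by
  refine le_of_forall_gt fun c hc => ?_
  obtain ⟨r, -, hr, hrc⟩ := ENNReal.lt_iff_exists_real_btwn.1 hc
  have hloc := eventually_comp_sub_le_of_slopePlus_lt hγ (mem_of_mem_nhds hs) hr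
  rw [nhdsWithin_eq_nhds.2 hs] at hloc
  calc ‖deriv (f ∘ γ) t‖ₑ = ENNReal.ofReal |deriv (f ∘ γ) t| := Real.enorm_eq_ofReal_abs _
    _ ≤ ENNReal.ofReal r := ENNReal.ofReal_le_ofReal (abs_deriv_le_of_eventually_sub_le ht hloc)
    _ < c := hrc

theorem lipschitzOnWith_one_of_eVariationOn_Icc_eq {X : Type*} [PseudoEMetricSpace X]
    {γ : ℝ → X} {a b : ℝ}
    (harc : ∀ s ∈ Icc a b, eVariationOn γ (Icc a s) = ENNReal.ofReal (s - a)) :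
    LipschitzOnWith 1 γ (Icc a b) := by
  have hIcc : ∀ x ∈ Icc a b, ∀ y ∈ Icc a b, x ≤ y →
      edist (γ x) (γ y) ≤ ENNReal.ofReal (y - x) := by
    intro x hx y hy hxy
    have hadd := eVariationOn.Icc_add_Icc γ (s := univ) hx.1 hxy (mem_univ x)
    simp only [univ_inter, harc x hx, harc y hy] at hadd
    rw [show y - a = (x - a) + (y - x) by ring,
      ENNReal.ofReal_add (sub_nonneg.2 hx.1) (sub_nonneg.2 hxy)] at hadd
    rw [← (ENNReal.add_right_inj ENNReal.ofReal_ne_top).1 hadd]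
    exact eVariationOn.edist_le γ (left_mem_Icc.2 hxy) (right_mem_Icc.2 hxy)
  intro x hx y hy
  rw [ENNReal.coe_one, one_mul, edist_dist, Real.dist_eq]
  rcases le_total x y with hxy | hyx
  · rw [abs_sub_comm, abs_of_nonneg (sub_nonneg.2 hxy)]; exact hIcc x hx y hy hxy
  · rw [abs_of_nonneg (sub_nonneg.2 hyx), edist_comm]; exact hIcc y hy x hx hyx

theorem slope_upper_gradient_general {X : Type*} [MetricSpace X]
    (f : X → ℝ) (hf : Continuous f) (hSL : (⨆ x, slopePlus f x) ≠ ⊤)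
    (a b : ℝ) (hab : a ≤ b) (γ : ℝ → X)
    (harc : ∀ s ∈ Set.Icc a b, eVariationOn γ (Set.Icc a s) = ENNReal.ofReal (s - a)) :
    (∀ᵐ t ∂(volume.restrict (Set.Icc a b)), DifferentiableAt ℝ (f ∘ γ) t)
    ∧ ENNReal.ofReal |f (γ a) - f (γ b)| ≤ ∫⁻ t in Set.Icc a b, slopePlus f (γ t) := by
  have hγ := lipschitzOnWith_one_of_eVariationOn_Icc_eq harc
  have hlip : LipschitzOnWith (⨆ x, slopePlus f x).toNNReal (f ∘ γ) (Icc a b) := by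
    refine lipschitzOnWith_of_eventually_sub_le ordConnected_Icc
      (hf.comp_continuousOn hγ.continuousOn) fun x hx r hr => ?_
    refine eventually_comp_sub_le_of_slopePlus_lt (f := f) hγ hx ((le_iSup _ (γ x)).trans_lt ?_)
    rwa [← ENNReal.ofReal_toReal hSL, ENNReal.ofReal_lt_ofReal_iff_of_nonneg ENNReal.toReal_nonneg]
  have hac := (uIcc_of_le hab ▸ hlip).absolutelyContinuousOnInterval
  have hdiff : ∀ᵐ t ∂(volume.restrict (Icc a b)), DifferentiableAt ℝ (f ∘ γ) t := by
    filter_upwards [ae_restrict_mem measurableSet_Icc, ae_restrict_of_ae hac.ae_differentiableAt]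
      with t ht hdt using hdt (uIcc_of_le hab ▸ ht)
  refine ⟨hdiff, ?_⟩
  have hbound : ∀ᵐ t ∂(volume.restrict (Icc a b)), ‖deriv (f ∘ γ) t‖ₑ ≤ slopePlus f (γ t) := by
    rw [Measure.restrict_congr_set Ioo_ae_eq_Icc.symm] at hdiff ⊢
    filter_upwards [ae_restrict_mem measurableSet_Ioo, hdiff] with t ht hdt
    exact enorm_deriv_comp_le_slopePlus hγ
      (mem_of_superset (Ioo_mem_nhds ht.1 ht.2) Ioo_subset_Icc_self) hdt
  calc ENNReal.ofReal |f (γ a) - f (γ b)| = ‖∫ t in a..b, deriv (f ∘ γ) t‖ₑ := by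
        rw [hac.integral_deriv_eq_sub, Real.enorm_eq_ofReal_abs, abs_sub_comm]; rfl
    _ ≤ ∫⁻ t in Ioc a b, ‖deriv (f ∘ γ) t‖ₑ := by
        rw [intervalIntegral.integral_of_le hab]; exact enorm_integral_le_lintegral_enorm _
    _ = ∫⁻ t in Icc a b, ‖deriv (f ∘ γ) t‖ₑ := setLIntegral_congr Ioc_ae_eq_Icc
    _ ≤ ∫⁻ t in Icc a b, slopePlus f (γ t) := lintegral_mono_ae hbound

/-- On a uniformly locally radially quasi-convex metric space, for continuous f with
bounded ascendent slope and an arc-length parametrized rectifiable curve γ on [a,b],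
f ∘ γ is differentiable a.e. and |f(γ(a)) - f(γ(b))| ≤ ∫_a^b |∂f|⁺(γ(t)) dt, i.e.
|∂f|⁺ is an upper gradient of f. -/
theorem slope_upper_gradient {X : Type*} [MetricSpace X]
    (K : ℝ) (hK : 1 ≤ K)
    (hqc : ∀ x₀ : X, ∃ U ∈ 𝓝 x₀, ∀ y ∈ U, ∃ γ : ℝ → X,
      ContinuousOn γ (Set.Icc 0 1) ∧ γ 0 = x₀ ∧ γ 1 = y ∧
      (∀ t ∈ Set.Icc (0:ℝ) 1, γ t ∈ U) ∧
      eVariationOn γ (Set.Icc 0 1) ≤ ENNReal.ofReal (K * dist x₀ y))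
    (f : X → ℝ) (hf : Continuous f) (hSL : (⨆ x, slopePlus f x) ≠ ⊤)
    (a b : ℝ) (hab : a ≤ b) (γ : ℝ → X) (hγc : ContinuousOn γ (Set.Icc a b))
    (harc : ∀ s ∈ Set.Icc a b, eVariationOn γ (Set.Icc a s) = ENNReal.ofReal (s - a)) :
    (∀ᵐ t ∂(volume.restrict (Set.Icc a b)), DifferentiableAt ℝ (f ∘ γ) t)
    ∧ ENNReal.ofReal |f (γ a) - f (γ b)| ≤ ∫⁻ t in Set.Icc a b, slopePlus f (γ t) :=
  slope_upper_gradient_general f hf hSL a b hab γ harc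
end

section
/- Let C be a normed cone contained in a real vector space E. Define d_e(x,y) = ‖y-x| if y-x ∈ C and d_e(x,y) = +∞ otherwise. Then d_e is an extended quasi-metric on C (d_e(x,x)=0; d_e(x,y)=d_e(y,x)=0 implies x=y; triangle inequality with values in [0,∞]). Moreover, d_e takes only finite values on C × C if and only if C is a linear subspace of E. -/
open scoped ENNReal Classical

noncomputable def coneEDist {E : Type*} [AddCommGroup E] (C : Set E) (n : E → ℝ) (x y : E) :
    ℝ≥0∞ :=
  if y - x ∈ C then ENNReal.ofReal (n (y - x)) else ⊤

section ConeEDist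

variable {E : Type*} [AddCommGroup E] {C : Set E} {n : E → ℝ}

theorem coneEDist_self (h0 : (0 : E) ∈ C) (hn : n 0 = 0) (x : E) : coneEDist C n x x = 0 := by
  simp [coneEDist, h0, hn]

theorem coneEDist_ne_top_iff {x y : E} : coneEDist C n x y ≠ ⊤ ↔ y - x ∈ C := by
  unfold coneEDist
  split_ifs with h <;> simp [h]

theorem eq_of_coneEDist_eq_zero (hn0 : ∀ v ∈ C, 0 ≤ n v) (hnzero : ∀ v ∈ C, n v = 0 → v = 0)
    {x y : E} (h : coneEDist C n x y = 0) : x = y := by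
  have hmem : y - x ∈ C := coneEDist_ne_top_iff.1 (h ▸ ENNReal.zero_ne_top)
  rw [coneEDist, if_pos hmem, ENNReal.ofReal_eq_zero] at h
  exact (sub_eq_zero.1 (hnzero _ hmem (h.antisymm (hn0 _ hmem)))).symm

theorem coneEDist_triangle (hadd : ∀ u ∈ C, ∀ v ∈ C, u + v ∈ C) (hn0 : ∀ v ∈ C, 0 ≤ n v)
    (hnadd : ∀ u ∈ C, ∀ v ∈ C, n (u + v) ≤ n u + n v) (x y z : E) :
    coneEDist C n x z ≤ coneEDist C n x y + coneEDist C n y z := by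
  by_cases hxy : y - x ∈ C
  · by_cases hyz : z - y ∈ C
    · have hsum : y - x + (z - y) = z - x := sub_add_sub_cancel' y x z
      have hxz : z - x ∈ C := hsum ▸ hadd _ hxy _ hyz
      rw [coneEDist, coneEDist, coneEDist, if_pos hxy, if_pos hyz, if_pos hxz,
        ← ENNReal.ofReal_add (hn0 _ hxy) (hn0 _ hyz)]
      exact ENNReal.ofReal_le_ofReal (hsum ▸ hnadd _ hxy _ hyz)
    · simp [coneEDist, hyz]
  · simp [coneEDist, hxy]

end ConeEDist

theorem exists_submodule_eq_of_neg_mem {E : Type*} [AddCommGroup E] [Module ℝ E] {C : Set E}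
    (h0 : (0 : E) ∈ C) (hadd : ∀ x ∈ C, ∀ y ∈ C, x + y ∈ C)
    (hsmul : ∀ r : ℝ, 0 ≤ r → ∀ x ∈ C, r • x ∈ C) (hneg : ∀ x ∈ C, -x ∈ C) :
    ∃ S : Submodule ℝ E, (S : Set E) = C := by
  refine ⟨{ carrier := C
            add_mem' := fun ha hb => hadd _ ha _ hb
            zero_mem' := h0
            smul_mem' := fun r x hx => ?_ }, rfl⟩
  rcases le_or_gt 0 r with hr | hr
  · exact hsmul r hr x hx
  · simpa using hsmul (-r) (by linarith) _ (hneg x hx)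

/-- Finiteness of `coneEDist` on `C × C` is exactly closure of the cone under negation. -/
theorem forall_coneEDist_ne_top_iff_exists_submodule {E : Type*} [AddCommGroup E] [Module ℝ E]
    {C : Set E} (n : E → ℝ) (h0 : (0 : E) ∈ C) (hadd : ∀ x ∈ C, ∀ y ∈ C, x + y ∈ C)
    (hsmul : ∀ r : ℝ, 0 ≤ r → ∀ x ∈ C, r • x ∈ C) :
    (∀ x ∈ C, ∀ y ∈ C, coneEDist C n x y ≠ ⊤) ↔ ∃ S : Submodule ℝ E, (S : Set E) = C := by
  constructor
  · intro hfin
    refine exists_submodule_eq_of_neg_mem h0 hadd hsmul fun x hx => ?_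
    simpa using coneEDist_ne_top_iff.1 (hfin x hx 0 h0)
  · rintro ⟨S, rfl⟩ x hx y hy
    exact coneEDist_ne_top_iff.2 (S.sub_mem hy hx)

theorem cone_extended_quasimetric_general {E : Type*} [AddCommGroup E] [Module ℝ E]
    (C : Set E) (h0 : (0:E) ∈ C)
    (hadd : ∀ x ∈ C, ∀ y ∈ C, x + y ∈ C)
    (hsmul : ∀ r : ℝ, 0 ≤ r → ∀ x ∈ C, r • x ∈ C)
    (n : E → ℝ) (hn0 : ∀ x ∈ C, 0 ≤ n x)
    (hnadd : ∀ x ∈ C, ∀ y ∈ C, n (x + y) ≤ n x + n y)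
    (hnzero : ∀ x ∈ C, (n x = 0 ↔ x = 0)) :
    let de : E → E → ℝ≥0∞ := fun x y => if y - x ∈ C then ENNReal.ofReal (n (y - x)) else ⊤
    (∀ x ∈ C, de x x = 0) ∧
    (∀ x ∈ C, ∀ y ∈ C, de x y = 0 → de y x = 0 → x = y) ∧
    (∀ x ∈ C, ∀ y ∈ C, ∀ z ∈ C, de x z ≤ de x y + de y z) ∧
    ((∀ x ∈ C, ∀ y ∈ C, de x y ≠ ⊤) ↔ ∃ S : Submodule ℝ E, (S : Set E) = C) := by
  show (∀ x ∈ C, coneEDist C n x x = 0) ∧ _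
  exact ⟨fun x _ => coneEDist_self h0 ((hnzero 0 h0).2 rfl) x,
    fun x _ y _ hxy _ => eq_of_coneEDist_eq_zero hn0 (fun v hv => (hnzero v hv).1) hxy,
    fun x _ y _ z _ => coneEDist_triangle hadd hn0 hnadd x y z,
    forall_coneEDist_ne_top_iff_exists_submodule n h0 hadd hsmul⟩

/-- For a normed cone C in a real vector space E, d_e(x,y) = ‖y-x| if y-x ∈ C and
+∞ otherwise is an extended quasi-metric on C; it takes only finite values iff C
is a linear subspace of E. -/
theorem cone_extended_quasimetric {E : Type*} [AddCommGroup E] [Module ℝ E]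
    (C : Set E) (h0 : (0:E) ∈ C)
    (hadd : ∀ x ∈ C, ∀ y ∈ C, x + y ∈ C)
    (hsmul : ∀ r : ℝ, 0 ≤ r → ∀ x ∈ C, r • x ∈ C)
    (n : E → ℝ) (hn0 : ∀ x ∈ C, 0 ≤ n x)
    (hnadd : ∀ x ∈ C, ∀ y ∈ C, n (x + y) ≤ n x + n y)
    (hnzero : ∀ x ∈ C, (n x = 0 ↔ x = 0))
    (hnsmul : ∀ r : ℝ, 0 ≤ r → ∀ x ∈ C, n (r • x) = r * n x) :
    let de : E → E → ℝ≥0∞ := fun x y => if y - x ∈ C then ENNReal.ofReal (n (y - x)) else ⊤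
    (∀ x ∈ C, de x x = 0) ∧
    (∀ x ∈ C, ∀ y ∈ C, de x y = 0 → de y x = 0 → x = y) ∧
    (∀ x ∈ C, ∀ y ∈ C, ∀ z ∈ C, de x z ≤ de x y + de y z) ∧
    ((∀ x ∈ C, ∀ y ∈ C, de x y ≠ ⊤) ↔ ∃ S : Submodule ℝ E, (S : Set E) = C) :=
  cone_extended_quasimetric_general C h0 hadd hsmul n hn0 hnadd hnzero
end
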